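/- arXiv:2306.01330 — 9 statements merged into one kernel-verified Lean document; each statement's English description precedes it below -/
import Mathlib

section
/- For any ρ > 0, θ > 0, u ∈ ℝ, with r = 1+ρ, σ = u/√(u²+θδ²), δ² = 4ρr, one has 1 + (1±σ)/2 + ρ(1∓σ) ≥ 1, hence the quantity (1±σ)/(2r) · {√(u²+θδ²)(1 + (1±σ)/2 + ρ(1∓σ))/r} + θρ/(r√(u²+θδ²)) is strictly positive; consequently ∇λ₋·r₋ < 0 < ∇λ₊·r₊, i.e. both characteristic fields of the inviscid Burgers fluid-particle system are genuinely nonlinear. -/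
theorem burgers_genuinely_nonlinear
    (ρ θ u : ℝ) (hρ : 0 < ρ) (hθ : 0 < θ)
    (r δ σ s : ℝ) (hr : r = 1 + ρ) (hδ : δ = 2 * Real.sqrt (ρ * r))
    (hσ : σ = u / Real.sqrt (u ^ 2 + θ * δ ^ 2))
    (hs : s = Real.sqrt (u ^ 2 + θ * δ ^ 2)) :
    (1 + (1 + σ) / 2 + ρ * (1 - σ) ≥ 1) ∧
    (1 + (1 - σ) / 2 + ρ * (1 + σ) ≥ 1) ∧
    (0 < (1 + σ) / (2 * r) * (s * (1 + (1 + σ) / 2 + ρ * (1 - σ)) / r)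
        + θ * ρ / (r * s)) ∧
    (0 < (1 - σ) / (2 * r) * (s * (1 + (1 - σ) / 2 + ρ * (1 + σ)) / r)
        + θ * ρ / (r * s)) ∧
    -- ∇λ₋ · s₋ < 0 < ∇λ₊ · s₊, with ∇μ± = (∂ρμ±, ∂uμ±) and s± = (ρ, λ± - u)
    (ρ * (-((1 - σ) * u) / (2 * r ^ 2) - θ / (r * s))
        + (-((1 - σ) / (2 * r)) * s) * (1 + (1 - σ) / (2 * r)) < 0) ∧
    (0 < ρ * (-((1 + σ) * u) / (2 * r ^ 2) + θ / (r * s))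
        + ((1 + σ) / (2 * r) * s) * (1 + (1 + σ) / (2 * r))) := by
  have hr0 : (0:ℝ) < r := by linarith
  have hδ2 : δ ^ 2 = 4 * (ρ * r) := by
    rw [hδ, mul_pow, Real.sq_sqrt (le_of_lt (mul_pos hρ hr0))]; ring
  have hxpos : 0 < u ^ 2 + θ * δ ^ 2 := by
    have : 0 < θ * δ ^ 2 := by rw [hδ2]; positivity
    nlinarith [sq_nonneg u]
  have hs0 : 0 < s := by rw [hs]; exact Real.sqrt_pos.mpr hxpos
  have hss : s ^ 2 = u ^ 2 + θ * δ ^ 2 := by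
    rw [hs, Real.sq_sqrt (le_of_lt hxpos)]
  have hu : u = σ * s := by
    rw [hσ, ← hs]; field_simp
  have habs : u ^ 2 ≤ s ^ 2 := by
    rw [hss]; nlinarith [hδ2, mul_pos hρ hr0]
  have hu2 : u ^ 2 = σ ^ 2 * s ^ 2 := by rw [hu]; ring
  have hσsq : σ ^ 2 ≤ 1 := by nlinarith [mul_pos hs0 hs0]
  have hσ1 : σ ≤ 1 := by nlinarith [sq_nonneg (σ - 1)]
  have hσ2 : -1 ≤ σ := by nlinarith [sq_nonneg (σ + 1)]
  have h1 : 1 + (1 + σ) / 2 + ρ * (1 - σ) ≥ 1 := by nlinarith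
  have h2 : 1 + (1 - σ) / 2 + ρ * (1 + σ) ≥ 1 := by nlinarith
  have hrs : 0 < θ * ρ / (r * s) := by positivity
  have h3 : 0 < (1 + σ) / (2 * r) * (s * (1 + (1 + σ) / 2 + ρ * (1 - σ)) / r)
      + θ * ρ / (r * s) := by
    have ht : 0 ≤ (1 + σ) / (2 * r) * (s * (1 + (1 + σ) / 2 + ρ * (1 - σ)) / r) := by
      apply mul_nonneg
      · apply div_nonneg (by linarith) (by positivity)
      · apply div_nonneg _ hr0.le
        apply mul_nonneg hs0.le; linarith
    linarith
  have h4 : 0 < (1 - σ) / (2 * r) * (s * (1 + (1 - σ) / 2 + ρ * (1 + σ)) / r)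
      + θ * ρ / (r * s) := by
    have ht : 0 ≤ (1 - σ) / (2 * r) * (s * (1 + (1 - σ) / 2 + ρ * (1 + σ)) / r) := by
      apply mul_nonneg
      · apply div_nonneg (by linarith) (by positivity)
      · apply div_nonneg _ hr0.le
        apply mul_nonneg hs0.le; linarith
    linarith
  have hrne : r ≠ 0 := ne_of_gt hr0
  have hsne : s ≠ 0 := ne_of_gt hs0
  have h6 : ρ * (-((1 + σ) * u) / (2 * r ^ 2) + θ / (r * s))
      + ((1 + σ) / (2 * r) * s) * (1 + (1 + σ) / (2 * r))
      = (1 + σ) / (2 * r) * (s * (1 + (1 + σ) / 2 + ρ * (1 - σ)) / r)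
      + θ * ρ / (r * s) := by
    rw [hu, hr]; field_simp; ring
  have h5 : ρ * (-((1 - σ) * u) / (2 * r ^ 2) - θ / (r * s))
      + (-((1 - σ) / (2 * r)) * s) * (1 + (1 - σ) / (2 * r))
      = -((1 - σ) / (2 * r) * (s * (1 + (1 - σ) / 2 + ρ * (1 + σ)) / r)
      + θ * ρ / (r * s)) := by
    rw [hu, hr]; field_simp; ring
  exact ⟨h1, h2, h3, h4, by rw [h5]; linarith, by rw [h6]; exact h3⟩
end

section
/- If ⟦ρ⟧ ≠ 0 and the Rankine–Hugoniot conditions for the inviscid Burgers fluid-particle system hold with c = ⟦ρu⟧/⟦ρ⟧, then ρ* r ⟦u⟧² - ⟦ρ⟧ u* ⟦u⟧ - θ⟦ρ⟧² = 0, hence u = u* ± (⟦ρ⟧/ρ*)·(√(u*² + θΔ²) ± u*)/(2r), where Δ² = 4ρ* r and r = 1+ρ. -/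
theorem rh_hugoniot_locus
    (θ c ρs us ρ u : ℝ) (hρs : 0 < ρs) (hρ : 0 < ρ) (hθ : 0 < θ)
    (r rs Δ : ℝ) (hr : r = 1 + ρ) (hrs : rs = 1 + ρs)
    (hΔ : Δ = 2 * Real.sqrt (ρs * r))
    (hjump : ρ - ρs ≠ 0)
    (hc : c = (ρ * u - ρs * us) / (ρ - ρs))
    (hRH1 : c * (ρ - ρs) = ρ * u - ρs * us)
    (hRH2 : c * (r * u - rs * us) = (r * u ^ 2 + θ * ρ) - (rs * us ^ 2 + θ * ρs)) :
    ρs * r * (u - us) ^ 2 - (ρ - ρs) * us * (u - us) - θ * (ρ - ρs) ^ 2 = 0 ∧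
    (u = us + ((ρ - ρs) / ρs) * ((Real.sqrt (us ^ 2 + θ * Δ ^ 2) + us) / (2 * r)) ∨
     u = us - ((ρ - ρs) / ρs) * ((Real.sqrt (us ^ 2 + θ * Δ ^ 2) - us) / (2 * r))) := by
  have hrpos : 0 < r := by rw [hr]; linarith
  have key : ρs * r * (u - us) ^ 2 - (ρ - ρs) * us * (u - us) - θ * (ρ - ρs) ^ 2 = 0 := by
    subst hr; subst hrs
    linear_combination (ρ - ρs) * hRH2 - ((1 + ρ) * u - (1 + ρs) * us) * hRH1
  refine ⟨key, ?_⟩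
  set s : ℝ := Real.sqrt (us ^ 2 + θ * Δ ^ 2) with hs
  have hΔ2 : Δ ^ 2 = 4 * (ρs * r) := by
    rw [hΔ]; rw [mul_pow, Real.sq_sqrt (by positivity : (0:ℝ) ≤ ρs * r)]; ring
  have hs2 : s ^ 2 = us ^ 2 + θ * Δ ^ 2 :=
    Real.sq_sqrt (by nlinarith [sq_nonneg us] : (0:ℝ) ≤ us ^ 2 + θ * Δ ^ 2)
  have hfac : (2 * ρs * r * (u - us) - (ρ - ρs) * (us + s)) *
      (2 * ρs * r * (u - us) - (ρ - ρs) * (us - s)) = 0 := by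
    linear_combination (4 * ρs * r) * key - (ρ - ρs) ^ 2 * hs2 -
      (ρ - ρs) ^ 2 * θ * hΔ2
  have hρs' : ρs ≠ 0 := ne_of_gt hρs
  have hr' : r ≠ 0 := ne_of_gt hrpos
  rcases mul_eq_zero.mp hfac with h | h
  · left
    field_simp
    linarith [h]
  · right
    field_simp
    linarith [h]
end

section
/- For ρ* > 0, θ > 0, the shock-speed functions c±(ρ) = u* ± (ρ/ρ*)·(√(u*² + θΔ(ρ)²) ± u*)/(2r), with Δ(ρ)² = 4ρ*(1+ρ) and r = 1+ρ, satisfy ∂ρ c₋(ρ) < 0 < ∂ρ c₊(ρ) for all ρ > 0. -/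
theorem shock_speed_monotonicity
    (ρs us θ : ℝ) (hρs : 0 < ρs) (hθ : 0 < θ)
    (cPlus cMinus : ℝ → ℝ)
    (hcP : ∀ ρ : ℝ, cPlus ρ = us + (ρ / ρs) *
        ((Real.sqrt (us ^ 2 + θ * (4 * ρs * (1 + ρ))) + us) / (2 * (1 + ρ))))
    (hcM : ∀ ρ : ℝ, cMinus ρ = us - (ρ / ρs) *
        ((Real.sqrt (us ^ 2 + θ * (4 * ρs * (1 + ρ))) - us) / (2 * (1 + ρ)))) :
    ∀ ρ : ℝ, 0 < ρ → deriv cMinus ρ < 0 ∧ 0 < deriv cPlus ρ := by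
  intro ρ hρ
  have hr : (0:ℝ) < 1 + ρ := by linarith
  have hqpos : 0 < us ^ 2 + θ * (4 * ρs * (1 + ρ)) := by positivity
  set s := Real.sqrt (us ^ 2 + θ * (4 * ρs * (1 + ρ))) with hsdef
  have hspos : 0 < s := Real.sqrt_pos.mpr hqpos
  have hs2 : s ^ 2 = us ^ 2 + θ * (4 * ρs * (1 + ρ)) := Real.sq_sqrt hqpos.le
  have husq : us ^ 2 < s ^ 2 := by
    rw [hs2]
    have : 0 < θ * (4 * ρs * (1 + ρ)) := by positivity
    linarith
  have hsu1 : 0 < s + us := by nlinarith [sq_nonneg (s + us)]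
  have hsu2 : 0 < s - us := by nlinarith [sq_nonneg (s - us)]
  -- derivative of the inner radicand
  have hq' : HasDerivAt (fun x : ℝ => us ^ 2 + θ * (4 * ρs * (1 + x))) (θ * (4 * ρs)) ρ := by
    have h1 : HasDerivAt (fun x : ℝ => 1 + x) 1 ρ := (hasDerivAt_id ρ).const_add 1
    have h2 := ((h1.const_mul (4 * ρs)).const_mul θ).const_add (us ^ 2)
    simpa using h2
  have hs' : HasDerivAt (fun x : ℝ => Real.sqrt (us ^ 2 + θ * (4 * ρs * (1 + x))))
      (θ * (4 * ρs) / (2 * s)) ρ := by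
    have := hq'.sqrt (ne_of_gt hqpos)
    simpa [← hsdef] using this
  have hD : HasDerivAt (fun x : ℝ => 2 * (1 + x)) 2 ρ := by
    simpa using ((hasDerivAt_id ρ).const_add 1).const_mul 2
  have hDne : (2 * (1 + ρ)) ≠ 0 := by positivity
  have hx : HasDerivAt (fun x : ℝ => x / ρs) (1 / ρs) ρ := by
    simpa using (hasDerivAt_id ρ).div_const ρs
  have hsne : s ≠ 0 := ne_of_gt hspos
  have hrne : (1 + ρ) ≠ 0 := ne_of_gt hr
  have hρsne : ρs ≠ 0 := ne_of_gt hρs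
  -- cPlus
  have hP : HasDerivAt cPlus
      ((s + us + ρ * (1 + ρ) * (2 * θ * ρs / s)) / (2 * ρs * (1 + ρ) ^ 2)) ρ := by
    have hfun : cPlus = fun x : ℝ => us + (x / ρs) *
        ((Real.sqrt (us ^ 2 + θ * (4 * ρs * (1 + x))) + us) / (2 * (1 + x))) := funext hcP
    rw [hfun]
    have hN := hs'.add_const us
    have hdiv := hN.div hD hDne
    have hmul := (hx.mul hdiv).const_add us
    convert hmul using 1
    case e'_4 => rfl
    case e'_5 => rfl
    case e'_8 => rfl
    simp only [Pi.div_apply]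
    rw [← hsdef]
    field_simp
    ring
  have hM : HasDerivAt cMinus
      (-((s - us + ρ * (1 + ρ) * (2 * θ * ρs / s)) / (2 * ρs * (1 + ρ) ^ 2))) ρ := by
    have hfun : cMinus = fun x : ℝ => us - (x / ρs) *
        ((Real.sqrt (us ^ 2 + θ * (4 * ρs * (1 + x))) - us) / (2 * (1 + x))) := funext hcM
    rw [hfun]
    have hN := hs'.sub_const us
    have hdiv := hN.div hD hDne
    have hmul := (hx.mul hdiv).const_sub us
    convert hmul using 1
    case e'_4 => rfl
    case e'_5 => rfl
    case e'_8 => rfl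
    simp only [Pi.div_apply]
    rw [← hsdef]
    field_simp
    ring
  have hPpos : 0 < (s + us + ρ * (1 + ρ) * (2 * θ * ρs / s)) / (2 * ρs * (1 + ρ) ^ 2) := by
    apply div_pos
    · have : 0 < ρ * (1 + ρ) * (2 * θ * ρs / s) := by positivity
      linarith
    · positivity
  have hMpos : 0 < (s - us + ρ * (1 + ρ) * (2 * θ * ρs / s)) / (2 * ρs * (1 + ρ) ^ 2) := by
    apply div_pos
    · have : 0 < ρ * (1 + ρ) * (2 * θ * ρs / s) := by positivity
      linarith
    · positivity
  refine ⟨?_, ?_⟩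
  · rw [hM.deriv]; linarith
  · rw [hP.deriv]; exact hPpos
end

section
/- Let D = D₀ + θD₁ with D₀ = (ρu/r³)[[u,-1],[0,0]] and D₁ = (1/r)[[1/r,0],[-ρu,ρ]], r = 1+ρ, and set Λ = √(ρr)·|u| (assume u > 0 so Λ = √(ρru²)). The symmetric part of D is positive definite if and only if θr² ∈ (Λ/(Λ+2), ∞) when 0 ≤ Λ ≤ 2, and θr² ∈ (Λ/(Λ+2), Λ/(Λ-2)) when Λ > 2. -/
/-!
The symmetric part of `D` is `!![a, b; b, d]` with `a > 0`, so it is positive definite exactly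
when `a d - b² > 0`. With `t = θ r²` and `Λ² = ρ r u²` one finds
`4 r⁷ (a d - b²) = ρ ((2t)² - Λ² (1 - t)²)`, so the condition is `Λ |1 - t| < 2t`. The branch
`1 - t > 0` gives `t > Λ / (Λ + 2)`; the branch `1 - t < 0` is automatic for `Λ ≤ 2` and gives
`t < Λ / (Λ - 2)` for `Λ > 2`.
-/

namespace Matrix

variable {K : Type*} [Field K] [StarRing K] [TrivialStar K]

lemma dotProduct_mulVec_fin_two_symm (a b d : K) (x : Fin 2 → K) :
    star x ⬝ᵥ (!![a, b; b, d] *ᵥ x) = a * x 0 ^ 2 + 2 * b * x 0 * x 1 + d * x 1 ^ 2 := by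
  simp only [star_trivial, dotProduct, mulVec, Fin.sum_univ_two, of_apply, cons_val', cons_val_zero,
    cons_val_one, empty_val', cons_val_fin_one]
  ring

lemma posDef_fin_two_symm_iff [LinearOrder K] [IsStrictOrderedRing K] (a b d : K) :
    !![a, b; b, d].PosDef ↔ 0 < a ∧ 0 < a * d - b ^ 2 := by
  rw [posDef_iff_dotProduct_mulVec]
  simp only [dotProduct_mulVec_fin_two_symm]
  constructor
  · rintro ⟨-, hpos⟩
    have ha : 0 < a := by simpa using @hpos ![1, 0] (by simp)
    -- evaluating at `(b, -a)` gives `a (a d - b²)`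
    have hdet : 0 < a * (a * d - b ^ 2) := by
      have := @hpos ![b, -a] (fun h0 => ha.ne' (by simpa using congrFun h0 1))
      simp only [cons_val_zero, cons_val_one] at this
      linear_combination this
    exact ⟨ha, pos_of_mul_pos_right hdet ha.le⟩
  · rintro ⟨ha, hdet⟩
    refine ⟨by ext i j; fin_cases i <;> fin_cases j <;> simp, fun x hx => ?_⟩
    have hsq : a * (a * x 0 ^ 2 + 2 * b * x 0 * x 1 + d * x 1 ^ 2) =
        (a * x 0 + b * x 1) ^ 2 + (a * d - b ^ 2) * x 1 ^ 2 := by ring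
    refine pos_of_mul_pos_right (hsq ▸ ?_) ha.le
    rcases eq_or_ne (x 1) 0 with h1 | h1
    · have h0 : x 0 ≠ 0 := fun h0 => hx (by ext i; fin_cases i <;> simp [h0, h1])
      simpa [h1] using sq_pos_of_ne_zero (mul_ne_zero ha.ne' h0)
    · exact add_pos_of_nonneg_of_pos (sq_nonneg _) (mul_pos hdet (sq_pos_of_ne_zero h1))

end Matrix

section

variable {K : Type*} [Field K] [LinearOrder K] [IsStrictOrderedRing K]

lemma mul_abs_one_sub_lt_two_mul_iff {Λ t : K} (hΛ : 0 ≤ Λ) (ht : 0 < t) :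
    Λ * |1 - t| < 2 * t ↔
      (Λ ≤ 2 ∧ Λ / (Λ + 2) < t) ∨ (2 < Λ ∧ Λ / (Λ + 2) < t ∧ t < Λ / (Λ - 2)) := by
  rw [← abs_of_nonneg hΛ, ← abs_mul, abs_lt, abs_of_nonneg hΛ, div_lt_iff₀ (by positivity)]
  have lower : Λ * (1 - t) < 2 * t ↔ Λ < t * (Λ + 2) := by constructor <;> intro h <;> linarith
  rcases le_or_gt Λ 2 with hle | hlt
  · have upper : -(2 * t) < Λ * (1 - t) := by nlinarith [mul_nonneg (sub_nonneg.2 hle) ht.le]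
    simp only [upper, lower, true_and, hle, not_lt.2 hle, false_and, or_false]
  · have upper : -(2 * t) < Λ * (1 - t) ↔ t < Λ / (Λ - 2) := by
      rw [lt_div_iff₀ (by linarith)]; constructor <;> intro h <;> linarith
    simp only [upper, lower, hlt, not_le.2 hlt, true_and, false_and, false_or]
    exact and_comm

end

lemma half_smul_add_transpose_eq (θ ρ u r : ℝ) :
    let D : Matrix (Fin 2) (Fin 2) ℝ :=
      (ρ * u / r ^ 3) • !![u, -1; (0 : ℝ), 0] + (θ / r) • !![1 / r, 0; -(ρ * u), ρ]
    (1 / 2 : ℝ) • (D + D.transpose) =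
      !![ρ * u ^ 2 / r ^ 3 + θ / r ^ 2, -(ρ * u / (2 * r ^ 3) + θ * ρ * u / (2 * r));
        -(ρ * u / (2 * r ^ 3) + θ * ρ * u / (2 * r)), θ * ρ / r] := by
  ext i j
  fin_cases i <;> fin_cases j <;> simp <;> ring

lemma symmPart_det_pos_iff {θ ρ u r Λ : ℝ} (hθ : 0 < θ) (hρ : 0 < ρ) (hr : 0 < r)
    (hΛ : 0 ≤ Λ) (hΛsq : Λ ^ 2 = ρ * r * u ^ 2) :
    0 < (ρ * u ^ 2 / r ^ 3 + θ / r ^ 2) * (θ * ρ / r) -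
        (-(ρ * u / (2 * r ^ 3) + θ * ρ * u / (2 * r))) ^ 2 ↔
      Λ * |1 - θ * r ^ 2| < 2 * (θ * r ^ 2) := by
  have key : 4 * r ^ 7 * ((ρ * u ^ 2 / r ^ 3 + θ / r ^ 2) * (θ * ρ / r) -
      (-(ρ * u / (2 * r ^ 3) + θ * ρ * u / (2 * r))) ^ 2) =
      ρ * ((2 * (θ * r ^ 2)) ^ 2 - (Λ * (1 - θ * r ^ 2)) ^ 2) := by
    field_simp
    linear_combination (4 * (θ * r ^ 2 - 1) ^ 2) * hΛsq
  rw [← mul_pos_iff_of_pos_left (by positivity : (0 : ℝ) < 4 * r ^ 7), key,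
    mul_pos_iff_of_pos_left hρ, sub_pos, sq_lt_sq, abs_mul, abs_of_nonneg hΛ,
    abs_of_pos (by positivity : 0 < 2 * (θ * r ^ 2))]

theorem Dsym_posdef_iff_general
    (θ ρ u : ℝ) (hθ : 0 < θ) (hρ : 0 < ρ)
    (r Λ : ℝ) (hr : r = 1 + ρ) (hΛ : Λ = Real.sqrt (ρ * r * u ^ 2))
    (D : Matrix (Fin 2) (Fin 2) ℝ)
    (hD : D = (ρ * u / r ^ 3) • !![u, -1; (0 : ℝ), 0] +
          (θ / r) • !![1 / r, 0; -(ρ * u), ρ]) :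
    ((1 / 2 : ℝ) • (D + D.transpose)).PosDef ↔
      ((Λ ≤ 2 ∧ Λ / (Λ + 2) < θ * r ^ 2) ∨
       (2 < Λ ∧ Λ / (Λ + 2) < θ * r ^ 2 ∧ θ * r ^ 2 < Λ / (Λ - 2))) := by
  subst hr hD
  have hΛ0 : 0 ≤ Λ := hΛ ▸ Real.sqrt_nonneg _
  have hΛsq : Λ ^ 2 = ρ * (1 + ρ) * u ^ 2 := hΛ ▸ Real.sq_sqrt (by positivity)
  rw [half_smul_add_transpose_eq, Matrix.posDef_fin_two_symm_iff,
    symmPart_det_pos_iff hθ hρ (by positivity) hΛ0 hΛsq,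
    mul_abs_one_sub_lt_two_mul_iff hΛ0 (by positivity)]
  exact and_iff_right (by positivity)

theorem Dsym_posdef_iff
    (θ ρ u : ℝ) (hθ : 0 < θ) (hρ : 0 < ρ) (hu : 0 < u)
    (r Λ : ℝ) (hr : r = 1 + ρ) (hΛ : Λ = Real.sqrt (ρ * r * u ^ 2))
    (D : Matrix (Fin 2) (Fin 2) ℝ)
    (hD : D = (ρ * u / r ^ 3) • !![u, -1; (0 : ℝ), 0] +
          (θ / r) • !![1 / r, 0; -(ρ * u), ρ]) :
    ((1 / 2 : ℝ) • (D + D.transpose)).PosDef ↔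
      ((Λ ≤ 2 ∧ Λ / (Λ + 2) < θ * r ^ 2) ∨
       (2 < Λ ∧ Λ / (Λ + 2) < θ * r ^ 2 ∧ θ * r ^ 2 < Λ / (Λ - 2))) :=
  Dsym_posdef_iff_general θ ρ u hθ hρ r Λ hr hΛ D hD
end

section
/- The characteristic polynomial of the matrix dF = [[0,0,1],[-ρu/r, u, ρ/r],[p'-u², θ-p', 2u]] is det(dF - λI) = -(λ-u){(λ-u)² - (np'+θρ)/r}, so for n,r,ρ > 0 with r = n+ρ and p' > 0, θ ≥ 0 (with np'+θρ > 0), the eigenvalues are λ₀ = u and λ± = u ± √((np'+θρ)/r), which are three distinct real numbers. -/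
theorem euler_jacobian_charpoly_eigenvalues
    (n ρ u θ p' : ℝ) (hn : 0 < n) (hρ : 0 < ρ) (hp' : 0 < p') (hθ : 0 ≤ θ)
    (r : ℝ) (hr : r = n + ρ)
    (dF : Matrix (Fin 3) (Fin 3) ℝ)
    (hdF : dF = !![0, 0, 1;
                   -(ρ * u) / r, u, ρ / r;
                   p' - u ^ 2, θ - p', 2 * u])
    (lam0 lamPlus lamMinus : ℝ)
    (h0 : lam0 = u)
    (hp : lamPlus = u + Real.sqrt ((n * p' + θ * ρ) / r))
    (hm : lamMinus = u - Real.sqrt ((n * p' + θ * ρ) / r)) :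
    (∀ lam : ℝ, (dF - lam • (1 : Matrix (Fin 3) (Fin 3) ℝ)).det
        = -(lam - u) * ((lam - u) ^ 2 - (n * p' + θ * ρ) / r)) ∧
    (dF - lam0 • (1 : Matrix (Fin 3) (Fin 3) ℝ)).det = 0 ∧
    (dF - lamPlus • (1 : Matrix (Fin 3) (Fin 3) ℝ)).det = 0 ∧
    (dF - lamMinus • (1 : Matrix (Fin 3) (Fin 3) ℝ)).det = 0 ∧
    lam0 ≠ lamPlus ∧ lam0 ≠ lamMinus ∧ lamPlus ≠ lamMinus := by
  have hrpos : 0 < r := by rw [hr]; positivity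
  have hr0 : r ≠ 0 := ne_of_gt hrpos
  have hcpos : 0 < (n * p' + θ * ρ) / r := by
    apply div_pos _ hrpos
    have := mul_nonneg hθ hρ.le
    nlinarith [mul_pos hn hp']
  have hsq : Real.sqrt ((n * p' + θ * ρ) / r) ^ 2 = (n * p' + θ * ρ) / r :=
    Real.sq_sqrt hcpos.le
  have hsqpos : 0 < Real.sqrt ((n * p' + θ * ρ) / r) := Real.sqrt_pos.2 hcpos
  have hdet : ∀ lam : ℝ, (dF - lam • (1 : Matrix (Fin 3) (Fin 3) ℝ)).det
      = -(lam - u) * ((lam - u) ^ 2 - (n * p' + θ * ρ) / r) := by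
    intro lam
    subst hdF hr
    rw [Matrix.det_fin_three]
    simp [Matrix.smul_apply, Matrix.one_apply]
    field_simp
    ring
  refine ⟨hdet, ?_, ?_, ?_, ?_, ?_, ?_⟩
  · rw [hdet, h0]; ring
  · rw [hdet, hp]; rw [show u + Real.sqrt ((n * p' + θ * ρ) / r) - u
      = Real.sqrt ((n * p' + θ * ρ) / r) by ring, hsq]; ring
  · rw [hdet, hm]
    have : u - Real.sqrt ((n * p' + θ * ρ) / r) - u
        = -Real.sqrt ((n * p' + θ * ρ) / r) := by ring
    rw [this, neg_pow, hsq]; ring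
  · rw [h0, hp]; intro h; nlinarith
  · rw [h0, hm]; intro h; nlinarith
  · rw [hp, hm]; intro h; nlinarith
end

section
/- For the inviscid Euler fluid-particle system with u = 0, the eigenvalue λ₀ = 0 of dF with right eigenvector r₀ = (p'-θ, p', 0)ᵀ satisfies ∇λ₀·r₀ = 0 (linearly degenerate), while for λ± = ±d, d = √((np'+θρ)/r), with right eigenvectors r± = (1, ρ/r, ±d)ᵀ, one has ∇λ±·r± = ±(n²p'' + 2np' + 2θρ)/(2dr²), which is nonzero whenever n > 0, ρ,θ ≥ 0, p',p'' > 0 (or n = 0, ρ,θ > 0). -/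
theorem euler_fields_classification
    (n ρ θ p' p'' : ℝ) (hn : 0 ≤ n) (hρ : 0 ≤ ρ) (hθ : 0 ≤ θ)
    (hp' : 0 < p') (hp'' : 0 < p'')
    (hcase : (0 < n ∧ 0 ≤ ρ ∧ 0 ≤ θ) ∨ (n = 0 ∧ 0 < ρ ∧ 0 < θ))
    (r d : ℝ) (hr : r = n + ρ) (hrpos : 0 < r)
    (hmix : 0 < n * p' + θ * ρ)
    (hd : d = Real.sqrt ((n * p' + θ * ρ) / r)) :
    -- linear degeneracy of λ₀: ∇λ₀ · r₀ = 0
    (0 * (p' - θ) + 0 * p' + (1 / r) * 0 = 0) ∧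
    -- ∇λ₊ · r₊
    ((n * p'' * r + ρ * (p' - θ)) / (2 * d * r ^ 2) * 1
      + (-((p' + n * p'' - θ) / (2 * d * r))) * (ρ / r)
      + (1 / r) * d
      = (n ^ 2 * p'' + 2 * n * p' + 2 * θ * ρ) / (2 * d * r ^ 2)) ∧
    -- ∇λ₋ · r₋
    ((-((n * p'' * r + ρ * (p' - θ)) / (2 * d * r ^ 2))) * 1
      + ((p' + n * p'' - θ) / (2 * d * r)) * (ρ / r)
      + (1 / r) * (-d)
      = -((n ^ 2 * p'' + 2 * n * p' + 2 * θ * ρ) / (2 * d * r ^ 2))) ∧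
    (n ^ 2 * p'' + 2 * n * p' + 2 * θ * ρ) / (2 * d * r ^ 2) ≠ 0 := by
  have hdpos : 0 < d := by
    rw [hd]; exact Real.sqrt_pos.mpr (div_pos hmix hrpos)
  have hd2 : d ^ 2 * r = n * p' + θ * ρ := by
    rw [hd, Real.sq_sqrt (le_of_lt (div_pos hmix hrpos))]
    field_simp
  have hdne : d ≠ 0 := ne_of_gt hdpos
  have hrne : r ≠ 0 := ne_of_gt hrpos
  refine ⟨by ring, ?_, ?_, ?_⟩
  · have key : (1/r) * d = 2 * (n * p' + θ * ρ) / (2 * d * r ^ 2) := by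
      field_simp
      linear_combination hd2
    rw [key, hr]
    field_simp
    ring
  · have key : (1/r) * (-d) = -(2 * (n * p' + θ * ρ)) / (2 * d * r ^ 2) := by
      field_simp
      linear_combination -hd2
    rw [key, hr]
    field_simp
    ring
  · have hnum : 0 < n ^ 2 * p'' + 2 * n * p' + 2 * θ * ρ := by
      rcases hcase with ⟨hn0, _, _⟩ | ⟨hn0, hρ0, hθ0⟩
      · positivity
      · subst hn0; simpa using by nlinarith
    positivity
end

section
/- If the Rankine–Hugoniot conditions c⟦ρ⟧ = ⟦ρu⟧, c⟦n⟧ = ⟦nu⟧, c⟦ru⟧ = ⟦ru² + θρ + p(n)⟧ hold with ⟦ρ⟧ ≠ 0, ⟦n⟧ ≠ 0, ⟦u⟧ ≠ 0, then nρ* = n*ρ, and ⟦u⟧² = (⟦n⟧²/(r*n))·(θρ*/n* + ⟦p⟧/⟦n⟧). -/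
theorem euler_rh_consequences
    (θ c ns ρs us n ρ u pn pns : ℝ)
    (hns : 0 < ns) (hρs : 0 < ρs) (hn : 0 < n) (hρ : 0 < ρ) (hθ : 0 ≤ θ)
    (r rs : ℝ) (hr : r = n + ρ) (hrs : rs = ns + ρs)
    (hRH1 : c * (ρ - ρs) = ρ * u - ρs * us)
    (hRH2 : c * (n - ns) = n * u - ns * us)
    (hRH3 : c * (r * u - rs * us)
        = (r * u ^ 2 + θ * ρ + pn) - (rs * us ^ 2 + θ * ρs + pns))
    (hjρ : ρ - ρs ≠ 0) (hjn : n - ns ≠ 0) (hju : u - us ≠ 0) :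
    n * ρs = ns * ρ ∧
    (u - us) ^ 2 = ((n - ns) ^ 2 / (rs * n)) *
        (θ * ρs / ns + (pn - pns) / (n - ns)) := by
  subst hr hrs
  have h1 : (u - us) * (n * ρs - ns * ρ) = 0 := by
    linear_combination (ρ - ρs) * hRH2 - (n - ns) * hRH1
  have hpart1 : n * ρs = ns * ρ := by
    rcases mul_eq_zero.mp h1 with h | h
    · exact absurd h hju
    · linarith
  have hm : (n + ρ) * (u - c) = (ns + ρs) * (us - c) := by
    linear_combination -hRH1 - hRH2
  have hus_c : (us - c) * (n - ns) = n * (us - u) := by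
    linear_combination -hRH2
  have hmom : (n + ρ) * (u - c) * (us - u) = θ * (ρ - ρs) + (pn - pns) := by
    linear_combination hRH3 + us * hm
  have hkey : (ns + ρs) * n * (u - us) ^ 2
      = (n - ns) * (θ * (ρ - ρs) + (pn - pns)) := by
    linear_combination (n - ns) * hmom + (us - u) * (-(ns + ρs) * hus_c - (n - ns) * hm)
  refine ⟨hpart1, ?_⟩
  have hrsn : (ns + ρs) * n ≠ 0 := by positivity
  have hns' : ns ≠ 0 := ne_of_gt hns
  field_simp
  linear_combination ns * hkey - θ * (n - ns) * hpart1
end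

section
/- Let p̄ : [0,∞) → ℝ be C², strictly increasing and strictly convex with p̄(0) = 0, p̄(1) = 1, and let κ > 0 with κ ≠ p̄'(1). Define g_κ(n) = (1 + κ - p̄(n))/κ - 1/n on (0, n̄] where p̄(n̄) = 1+κ. Then g_κ(1) = 0, g_κ is strictly concave, g_κ(n) → -∞ as n → 0⁺, g_κ(n̄) < 0, and there exists a unique n× ≠ 1 in (0, n̄) with g_κ(n×) = 0; moreover n× < 1 if and only if κ < p̄'(1). -/
theorem gkappa_unique_zero
    (p p' p'' : ℝ → ℝ) (κ nbar : ℝ)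
    (hderiv : ∀ x : ℝ, 0 < x → HasDerivAt p (p' x) x)
    (hderiv' : ∀ x : ℝ, 0 < x → HasDerivAt p' (p'' x) x)
    (hp'pos : ∀ x : ℝ, 0 < x → 0 < p' x)
    (hp''pos : ∀ x : ℝ, 0 < x → 0 < p'' x)
    (hp0 : p 0 = 0) (hp1 : p 1 = 1)
    (hκ : 0 < κ) (hκne : κ ≠ p' 1)
    (hnbar : 0 < nbar) (hpnbar : p nbar = 1 + κ)
    (g : ℝ → ℝ) (hg : ∀ n : ℝ, g n = (1 + κ - p n) / κ - 1 / n) :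
    g 1 = 0 ∧
    StrictConcaveOn ℝ (Set.Ioc 0 nbar) g ∧
    Filter.Tendsto g (nhdsWithin 0 (Set.Ioi 0)) Filter.atBot ∧
    g nbar < 0 ∧
    (∃! n : ℝ, n ∈ Set.Ioo 0 nbar ∧ n ≠ 1 ∧ g n = 0) ∧
    (∀ n : ℝ, n ∈ Set.Ioo 0 nbar → n ≠ 1 → g n = 0 → (n < 1 ↔ κ < p' 1)) := by
  have hκ0 : κ ≠ 0 := ne_of_gt hκ
  have hp'1 : 0 < p' 1 := hp'pos 1 one_pos
  -- g 1 = 0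
  have hg1 : g 1 = 0 := by rw [hg, hp1]; field_simp; ring
  -- derivative of g
  set g' : ℝ → ℝ := fun x => 1 / x ^ 2 - p' x / κ with hg'def
  have hgd : ∀ x : ℝ, 0 < x → HasDerivAt g (g' x) x := by
    intro x hx
    have hp := hderiv x hx
    have h1 : HasDerivAt (fun n => 1 + κ - p n) (0 - p' x) x :=
      (hasDerivAt_const x (1 + κ)).sub hp
    have h2 := h1.div_const κ
    have h3 : HasDerivAt (fun n : ℝ => 1 / n) (-(1 / x ^ 2)) x := by
      simpa [one_div] using hasDerivAt_inv hx.ne'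
    have h4 := h2.sub h3
    have hgeq : g = fun n => (1 + κ - p n) / κ - 1 / n := funext hg
    rw [hgeq]
    convert h4 using 1
    show (1:ℝ) / x ^ 2 - p' x / κ = _
    ring
    all_goals rfl
  have hgc : ContinuousOn g (Set.Ioi 0) := fun x hx =>
    (hgd x hx).continuousAt.continuousWithinAt
  -- p' is strictly monotone on (0, ∞)
  have hp'cont : ContinuousOn p' (Set.Ioi 0) := fun x hx =>
    (hderiv' x hx).continuousAt.continuousWithinAt
  have hp'mono : StrictMonoOn p' (Set.Ioi 0) := by
    apply strictMonoOn_of_deriv_pos (convex_Ioi 0) hp'cont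
    intro x hx
    rw [interior_Ioi] at hx
    rw [(hderiv' x hx).deriv]
    exact hp''pos x hx
  -- nbar > 1
  have hnbar1 : 1 < nbar := by
    by_contra h
    push_neg at h
    have hmono : StrictMonoOn p (Set.Ioi 0) := by
      apply strictMonoOn_of_deriv_pos (convex_Ioi 0)
        (fun x hx => (hderiv x hx).continuousAt.continuousWithinAt)
      intro x hx
      rw [interior_Ioi] at hx
      rw [(hderiv x hx).deriv]
      exact hp'pos x hx
    have : p nbar ≤ p 1 := hmono.monotoneOn (Set.mem_Ioi.2 hnbar) (Set.mem_Ioi.2 one_pos) h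
    rw [hp1, hpnbar] at this; linarith
  -- g' strictly antitone
  have hg'anti : StrictAntiOn g' (Set.Ioi 0) := by
    intro x hx y hy hxy
    have hx0 : (0:ℝ) < x := hx
    have hy0 : (0:ℝ) < y := hy
    have h1 : 1 / y ^ 2 < 1 / x ^ 2 := by
      apply one_div_lt_one_div_of_lt (by positivity)
      nlinarith
    have h2 : p' x < p' y := hp'mono hx hy hxy
    have h3 : p' x / κ < p' y / κ := (div_lt_div_iff_of_pos_right hκ).mpr h2
    simp only [hg'def]
    linarith
  -- strict concavity
  have hconc : StrictConcaveOn ℝ (Set.Ioc 0 nbar) g := by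
    apply StrictAntiOn.strictConcaveOn_of_deriv (convex_Ioc 0 nbar)
      (hgc.mono Set.Ioc_subset_Ioi_self)
    rw [interior_Ioc]
    intro x hx y hy hxy
    rw [(hgd x hx.1).deriv, (hgd y hy.1).deriv]
    exact hg'anti hx.1 hy.1 hxy
  -- lower bound for p near 0
  have hplow : ∀ x ∈ Set.Ioc (0:ℝ) 1, 1 - p' 1 ≤ p x := by
    intro x hx
    rcases eq_or_lt_of_le hx.2 with h | h
    · rw [h, hp1]; linarith
    · have hanti : StrictAntiOn (fun y => p y - p' 1 * y) (Set.Ioc 0 1) := by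
        apply strictAntiOn_of_deriv_neg (convex_Ioc 0 1)
        · intro y hy
          exact ((hderiv y hy.1).continuousAt.sub
            (continuousAt_const.mul continuousAt_id)).continuousWithinAt
        · rw [interior_Ioc]
          intro y hy
          have hd : HasDerivAt (fun y => p y - p' 1 * y) (p' y - p' 1 * 1) y :=
            (hderiv y hy.1).sub ((hasDerivAt_id y).const_mul (p' 1))
          rw [hd.deriv]
          have := hp'mono (Set.mem_Ioi.2 hy.1) (Set.mem_Ioi.2 one_pos) hy.2
          linarith
      have h2 := hanti hx ⟨one_pos, le_refl 1⟩ h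
      simp only [hp1] at h2
      nlinarith [hx.1]
  -- tendsto atBot
  have htend : Filter.Tendsto g (nhdsWithin 0 (Set.Ioi 0)) Filter.atBot := by
    have h2 : Filter.Tendsto (fun x : ℝ => 1 / x) (nhdsWithin 0 (Set.Ioi 0)) Filter.atTop := by
      simpa [one_div] using
        (tendsto_inv_nhdsGT_zero : Filter.Tendsto (fun x : ℝ => x⁻¹) _ _)
    have h2' : Filter.Tendsto (fun x : ℝ => -(1 / x)) (nhdsWithin 0 (Set.Ioi 0)) Filter.atBot :=
      Filter.tendsto_neg_atTop_atBot.comp h2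
    have h1 : Filter.Tendsto (fun x : ℝ => (κ + p' 1) / κ - 1 / x)
        (nhdsWithin 0 (Set.Ioi 0)) Filter.atBot := by
      simpa [sub_eq_add_neg] using
        Filter.tendsto_atBot_add_const_left _ ((κ + p' 1) / κ) h2'
    refine Filter.tendsto_atBot_mono' _ ?_ h1
    filter_upwards [Ioc_mem_nhdsGT_of_mem (Set.left_mem_Ico.2 one_pos)] with x hx
    rw [hg]
    have hnum : 1 + κ - p x ≤ κ + p' 1 := by
      have := hplow x hx
      linarith
    have := (div_le_div_iff_of_pos_right hκ).mpr hnum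
    linarith
  -- g nbar < 0
  have hgnbar : g nbar < 0 := by
    rw [hg, hpnbar]
    have h1 : (0:ℝ) < 1 / nbar := by positivity
    have h2 : (1 + κ - (1 + κ)) / κ = 0 := by ring
    linarith
  -- no three zeros (strict concavity)
  have key : ∀ a b c : ℝ, a ∈ Set.Ioc 0 nbar → c ∈ Set.Ioc 0 nbar → a < b → b < c →
      g a = 0 → g c = 0 → 0 < g b := by
    intro a b c ha hc hab hbc ga gc
    set t := (c - b) / (c - a) with ht
    have hca : (0:ℝ) < c - a := by linarith
    have ht0 : 0 < t := div_pos (by linarith) hca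
    have ht1 : t < 1 := (div_lt_one hca).mpr (by linarith)
    have hcomb : t * a + (1 - t) * c = b := by
      rw [ht]; field_simp
      ring
    have h := hconc.2 ha hc (by linarith : a ≠ c) ht0 (by linarith : 0 < 1 - t)
      (by ring : t + (1 - t) = 1)
    rw [ga, gc] at h
    simp only [smul_eq_mul, mul_zero, add_zero] at h
    rwa [hcomb] at h
  have no3 : ∀ a b c : ℝ, a ∈ Set.Ioc 0 nbar → c ∈ Set.Ioc 0 nbar → a < b → b < c →
      g a = 0 → g b = 0 → g c = 0 → False := by
    intro a b c ha hc h1 h2 za zb zc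
    have := key a b c ha hc h1 h2 za zc
    linarith [zb ▸ this]
  have h1mem : (1:ℝ) ∈ Set.Ioc 0 nbar := ⟨one_pos, hnbar1.le⟩
  -- at most one zero besides 1
  have sort3 : ∀ x y : ℝ, x ∈ Set.Ioc 0 nbar → y ∈ Set.Ioc 0 nbar → x ≠ y → x ≠ 1 → y ≠ 1 →
      g x = 0 → g y = 0 → False := by
    have aux : ∀ x y : ℝ, x ∈ Set.Ioc 0 nbar → y ∈ Set.Ioc 0 nbar → x < y → x ≠ 1 → y ≠ 1 →
        g x = 0 → g y = 0 → False := by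
      intro x y hx hy h hx1 hy1 zx zy
      rcases hx1.lt_or_gt with h1 | h1
      · rcases hy1.lt_or_gt with h2 | h2
        · exact no3 x y 1 hx h1mem h h2 zx zy hg1
        · exact no3 x 1 y hx hy h1 h2 zx hg1 zy
      · exact no3 1 x y h1mem hy h1 h hg1 zx zy
    intro x y hx hy hxy hx1 hy1 zx zy
    rcases hxy.lt_or_gt with h | h
    · exact aux x y hx hy h hx1 hy1 zx zy
    · exact aux y x hy hx h hy1 hx1 zy zx
  -- existence of the second zero
  have hslope : Filter.Tendsto (slope g 1) (nhdsWithin 1 {(1:ℝ)}ᶜ) (nhds (g' 1)) :=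
    hasDerivAt_iff_tendsto_slope.mp (hgd 1 one_pos)
  have hg'1 : g' 1 = 1 - p' 1 / κ := by simp [hg'def]
  have hexist : ∃ c : ℝ, c ∈ Set.Ioo 0 nbar ∧ g c = 0 ∧
      ((c < 1 ∧ κ < p' 1) ∨ (1 < c ∧ p' 1 < κ)) := by
    rcases hκne.lt_or_gt with hcase | hcase
    · -- κ < p' 1 : g' 1 < 0, zero to the left of 1
      have hneg : g' 1 < 0 := by
        rw [hg'1]
        have : 1 < p' 1 / κ := (one_lt_div hκ).mpr hcase
        linarith
      have hev : ∀ᶠ x in nhdsWithin 1 {(1:ℝ)}ᶜ, slope g 1 x < 0 :=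
        hslope.eventually (gt_mem_nhds hneg)
      have hmono : nhdsWithin (1:ℝ) (Set.Iio 1) ≤ nhdsWithin 1 {(1:ℝ)}ᶜ :=
        nhdsWithin_mono 1 (fun x hx => Set.mem_compl_singleton_iff.mpr (ne_of_lt hx))
      have hev2 := hev.filter_mono hmono
      have hev3 : ∀ᶠ x in nhdsWithin (1:ℝ) (Set.Iio 1), x ∈ Set.Ioo (0:ℝ) 1 :=
        Filter.eventually_of_mem (Ioo_mem_nhdsLT_of_mem ⟨one_pos, le_refl 1⟩) (fun x hx => hx)
      obtain ⟨x, hsl, hxm⟩ := (hev2.and hev3).exists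
      rw [slope_def_field, hg1, sub_zero] at hsl
      have hgx : 0 < g x := by
        have hx1 : x - 1 < 0 := by linarith [hxm.2]
        have := mul_pos_of_neg_of_neg hsl hx1
        rwa [div_mul_cancel₀ _ (by linarith : x - 1 ≠ 0)] at this
      -- pick δ with g δ < 0
      have hev4 : ∀ᶠ y in nhdsWithin 0 (Set.Ioi 0), g y < 0 :=
        htend.eventually (Filter.eventually_lt_atBot 0)
      have hev5 : ∀ᶠ y in nhdsWithin 0 (Set.Ioi 0), y ∈ Set.Ioo (0:ℝ) x :=
        Filter.eventually_of_mem (Ioo_mem_nhdsGT_of_mem ⟨le_refl 0, hxm.1⟩) (fun y hy => hy)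
      obtain ⟨δ, hδneg, hδm⟩ := (hev4.and hev5).exists
      have hsub : Set.Icc δ x ⊆ Set.Ioi 0 := fun y hy => lt_of_lt_of_le hδm.1 hy.1
      obtain ⟨c, hcm, hcz⟩ := intermediate_value_Ioo hδm.2.le (hgc.mono hsub) ⟨hδneg, hgx⟩
      refine ⟨c, ⟨lt_trans hδm.1 hcm.1, ?_⟩, hcz, Or.inl ⟨lt_trans hcm.2 hxm.2, hcase⟩⟩
      exact lt_trans (lt_trans hcm.2 hxm.2) hnbar1
    · -- p' 1 < κ : g' 1 > 0, zero to the right of 1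
      have hpos : 0 < g' 1 := by
        rw [hg'1]
        have : p' 1 / κ < 1 := (div_lt_one hκ).mpr hcase
        linarith
      have hev : ∀ᶠ x in nhdsWithin 1 {(1:ℝ)}ᶜ, 0 < slope g 1 x :=
        hslope.eventually (lt_mem_nhds hpos)
      have hmono : nhdsWithin (1:ℝ) (Set.Ioi 1) ≤ nhdsWithin 1 {(1:ℝ)}ᶜ :=
        nhdsWithin_mono 1 (fun x hx => Set.mem_compl_singleton_iff.mpr (ne_of_gt hx))
      have hev2 := hev.filter_mono hmono
      have hev3 : ∀ᶠ x in nhdsWithin (1:ℝ) (Set.Ioi 1), x ∈ Set.Ioo (1:ℝ) nbar :=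
        Filter.eventually_of_mem (Ioo_mem_nhdsGT_of_mem ⟨le_refl 1, hnbar1⟩) (fun x hx => hx)
      obtain ⟨x, hsl, hxm⟩ := (hev2.and hev3).exists
      rw [slope_def_field, hg1, sub_zero] at hsl
      have hgx : 0 < g x := by
        have hx1 : 0 < x - 1 := by linarith [hxm.1]
        have := mul_pos hsl hx1
        rwa [div_mul_cancel₀ _ (by linarith : x - 1 ≠ 0)] at this
      have hsub : Set.Icc x nbar ⊆ Set.Ioi 0 := fun y hy =>
        lt_of_lt_of_le (lt_trans one_pos hxm.1) hy.1
      obtain ⟨c, hcm, hcz⟩ := intermediate_value_Ioo' hxm.2.le (hgc.mono hsub) ⟨hgnbar, hgx⟩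
      exact ⟨c, ⟨lt_trans (lt_trans one_pos hxm.1) hcm.1, hcm.2⟩, hcz,
        Or.inr ⟨lt_trans hxm.1 hcm.1, hcase⟩⟩
  obtain ⟨c, hcm, hcz, hcside⟩ := hexist
  have hcne : c ≠ 1 := by
    rcases hcside with ⟨h, _⟩ | ⟨h, _⟩
    · exact ne_of_lt h
    · exact ne_of_gt h
  have hcIoc : c ∈ Set.Ioc 0 nbar := ⟨hcm.1, hcm.2.le⟩
  have huniq : ∀ m : ℝ, m ∈ Set.Ioo 0 nbar → m ≠ 1 → g m = 0 → m = c := by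
    intro m hm hm1 hmz
    by_contra hne
    exact sort3 m c ⟨hm.1, hm.2.le⟩ hcIoc hne hm1 hcne hmz hcz
  refine ⟨hg1, hconc, htend, hgnbar, ⟨c, ⟨hcm, hcne, hcz⟩, fun m hm => huniq m hm.1 hm.2.1 hm.2.2⟩, ?_⟩
  intro n hn hn1 hnz
  have hnc : n = c := huniq n hn hn1 hnz
  rcases hcside with ⟨h1, h2⟩ | ⟨h1, h2⟩
  · exact ⟨fun _ => h2, fun _ => hnc ▸ h1⟩
  · constructor
    · intro h; rw [hnc] at h; linarith
    · intro h; linarith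
end

section
/- Let h(n) = p̄(n) + n p̄'(n) with p̄ as above, κ* = p̄'(1), n_#(κ) = h⁻¹(1+κ), and τ_#(κ) = κ/(n_#(κ)² p̄'(n_#(κ))). Then 0 < τ_#(κ) ≤ 1 for all κ > 0 with equality iff κ = κ*; moreover the function f(κ) := n_#(κ)² p̄'(n_#(κ)) - κ is strictly convex with f'(κ) = n_#(κ) - 1, attains its unique minimum 0 at κ = κ*. -/
theorem tau_hashtag_le_one
    (p p' p'' : ℝ → ℝ)
    (hderiv : ∀ x : ℝ, 0 < x → HasDerivAt p (p' x) x)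
    (hderiv' : ∀ x : ℝ, 0 < x → HasDerivAt p' (p'' x) x)
    (hp'pos : ∀ x : ℝ, 0 < x → 0 < p' x)
    (hp''pos : ∀ x : ℝ, 0 < x → 0 < p'' x)
    (hp0 : p 0 = 0) (hp1 : p 1 = 1)
    (nh : ℝ → ℝ)
    (hnh : ∀ κ : ℝ, 0 < κ → 0 < nh κ ∧ p (nh κ) + nh κ * p' (nh κ) = 1 + κ)
    (τh f : ℝ → ℝ)
    (hτh : ∀ κ : ℝ, τh κ = κ / ((nh κ) ^ 2 * p' (nh κ)))
    (hf : ∀ κ : ℝ, f κ = (nh κ) ^ 2 * p' (nh κ) - κ) :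
    (∀ κ : ℝ, 0 < κ → 0 < τh κ ∧ τh κ ≤ 1 ∧ (τh κ = 1 ↔ κ = p' 1)) ∧
    StrictConvexOn ℝ (Set.Ioi 0) f ∧
    (∀ κ : ℝ, 0 < κ → deriv f κ = nh κ - 1) ∧
    f (p' 1) = 0 ∧
    (∀ κ : ℝ, 0 < κ → κ ≠ p' 1 → 0 < f κ) := by
  have hκs : (0:ℝ) < p' 1 := hp'pos 1 one_pos
  set H : ℝ → ℝ := fun n => p n + n * p' n with hHdef
  -- derivative of H
  have hH : ∀ x : ℝ, 0 < x → HasDerivAt H (2 * p' x + x * p'' x) x := by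
    intro x hx
    have h1 := (hderiv x hx).add ((hasDerivAt_id x).mul (hderiv' x hx))
    exact h1.congr_deriv (by simp only [id]; ring)
  -- H strictly monotone on Ioi 0
  have hmono : StrictMonoOn H (Set.Ioi 0) := by
    apply strictMonoOn_of_deriv_pos (convex_Ioi 0)
    · intro x hx
      exact (hH x hx).continuousAt.continuousWithinAt
    · intro x hx
      rw [interior_Ioi] at hx
      rw [(hH x hx).deriv]
      have h1 := hp'pos x hx
      have h2 := hp''pos x hx
      have hx0 : (0:ℝ) < x := hx
      nlinarith
  have hHval : ∀ κ : ℝ, 0 < κ → H (nh κ) = 1 + κ := fun κ hκ => (hnh κ hκ).2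
  have hH1 : H 1 = 1 + p' 1 := by simp [hHdef, hp1]
  -- nh strictly monotone
  have hnhmono : StrictMonoOn nh (Set.Ioi 0) := by
    intro a ha b hb hab
    by_contra hle
    push_neg at hle
    have h1 : H (nh b) ≤ H (nh a) :=
      hmono.monotoneOn (hnh b hb).1 (hnh a ha).1 hle
    rw [hHval a ha, hHval b hb] at h1
    linarith
  -- nh κ = 1 ↔ κ = p' 1
  have hne : ∀ κ : ℝ, 0 < κ → (nh κ = 1 ↔ κ = p' 1) := by
    intro κ hκ
    constructor
    · intro h1
      have := hHval κ hκ
      rw [h1, hH1] at this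
      linarith
    · intro h1
      have h2 : H (nh κ) = H 1 := by rw [hHval κ hκ, hH1, h1]
      exact hmono.injOn (hnh κ hκ).1 (Set.mem_Ioi.mpr one_pos) h2
  -- continuity of nh
  have hcont : ∀ κ : ℝ, 0 < κ → ContinuousAt nh κ := by
    intro κ hκ
    obtain ⟨hn0, heq0⟩ := hnh κ hκ
    rw [Metric.continuousAt_iff]
    intro ε hε
    set ε' := min (ε / 2) (nh κ / 2) with hε'def
    have hε'pos : 0 < ε' := lt_min (by linarith) (by linarith)
    have hε'le : ε' ≤ ε / 2 := min_le_left _ _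
    have hε'le2 : ε' ≤ nh κ / 2 := min_le_right _ _
    have hlo : 0 < nh κ - ε' := by linarith
    have h1 : H (nh κ - ε') < 1 + κ := by
      rw [← hHval κ hκ]
      exact hmono (Set.mem_Ioi.mpr hlo) (Set.mem_Ioi.mpr hn0) (by linarith)
    have h2 : 1 + κ < H (nh κ + ε') := by
      rw [← hHval κ hκ]
      exact hmono (Set.mem_Ioi.mpr hn0) (Set.mem_Ioi.mpr (by linarith)) (by linarith)
    refine ⟨min (min (1 + κ - H (nh κ - ε')) (H (nh κ + ε') - (1 + κ))) κ,
      lt_min (lt_min (by linarith) (by linarith)) hκ, ?_⟩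
    intro x hx
    rw [Real.dist_eq, abs_lt] at hx
    obtain ⟨hx1, hx2⟩ := hx
    have hd1 : min (min (1 + κ - H (nh κ - ε')) (H (nh κ + ε') - (1 + κ))) κ ≤
        1 + κ - H (nh κ - ε') := le_trans (min_le_left _ _) (min_le_left _ _)
    have hd2 : min (min (1 + κ - H (nh κ - ε')) (H (nh κ + ε') - (1 + κ))) κ ≤
        H (nh κ + ε') - (1 + κ) := le_trans (min_le_left _ _) (min_le_right _ _)
    have hd3 : min (min (1 + κ - H (nh κ - ε')) (H (nh κ + ε') - (1 + κ))) κ ≤ κ :=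
      min_le_right _ _
    have hxpos : 0 < x := by linarith
    obtain ⟨hnx, heqx⟩ := hnh x hxpos
    have hHx : H (nh x) = 1 + x := heqx
    have hlt1 : H (nh κ - ε') < H (nh x) := by rw [hHx]; linarith
    have hlt2 : H (nh x) < H (nh κ + ε') := by rw [hHx]; linarith
    have hb1 : nh κ - ε' < nh x := by
      by_contra hc
      push_neg at hc
      have := hmono.monotoneOn (Set.mem_Ioi.mpr hnx) (Set.mem_Ioi.mpr hlo) hc
      linarith
    have hb2 : nh x < nh κ + ε' := by
      by_contra hc
      push_neg at hc
      have := hmono.monotoneOn (Set.mem_Ioi.mpr (by linarith : (0:ℝ) < nh κ + ε'))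
        (Set.mem_Ioi.mpr hnx) hc
      linarith
    rw [Real.dist_eq, abs_lt]
    constructor <;> linarith
  -- derivative of nh via inverse function
  have hnhderiv : ∀ κ : ℝ, 0 < κ →
      HasDerivAt nh (2 * p' (nh κ) + nh κ * p'' (nh κ))⁻¹ κ := by
    intro κ hκ
    obtain ⟨hn0, heq0⟩ := hnh κ hκ
    have hd : HasDerivAt (fun n => H n - 1) (2 * p' (nh κ) + nh κ * p'' (nh κ)) (nh κ) :=
      (hH (nh κ) hn0).sub_const 1
    have hd0 : (2 * p' (nh κ) + nh κ * p'' (nh κ)) ≠ 0 := by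
      have h1 := hp'pos (nh κ) hn0
      have h2 := hp''pos (nh κ) hn0
      nlinarith
    refine HasDerivAt.of_local_left_inverse (hcont κ hκ) hd hd0 ?_
    filter_upwards [Ioi_mem_nhds hκ] with y hy
    have := hHval y hy
    simp only [this]
    ring
  -- derivative of f
  have hfderiv : ∀ κ : ℝ, 0 < κ → HasDerivAt f (nh κ - 1) κ := by
    intro κ hκ
    obtain ⟨hn0, _⟩ := hnh κ hκ
    have hg : HasDerivAt (fun n => n ^ 2 * p' n)
        (2 * nh κ * p' (nh κ) + (nh κ) ^ 2 * p'' (nh κ)) (nh κ) := by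
      have h1 := (hasDerivAt_pow 2 (nh κ)).mul (hderiv' (nh κ) hn0)
      exact h1.congr_deriv (by norm_num [pow_one])
    have hcomp := (hg.comp κ (hnhderiv κ hκ)).sub (hasDerivAt_id κ)
    have hfun : f = fun x => (fun n => n ^ 2 * p' n) (nh x) - x := by
      funext x; simp [hf x]
    rw [hfun]
    refine hcomp.congr_deriv ?_
    have h1 := hp'pos (nh κ) hn0
    have h2 := hp''pos (nh κ) hn0
    have hd0 : (2 * p' (nh κ) + nh κ * p'' (nh κ)) ≠ 0 := by nlinarith
    field_simp
  have hderivf : ∀ κ : ℝ, 0 < κ → deriv f κ = nh κ - 1 :=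
    fun κ hκ => (hfderiv κ hκ).deriv
  -- strict convexity
  have hconv : StrictConvexOn ℝ (Set.Ioi 0) f := by
    apply StrictMonoOn.strictConvexOn_of_deriv (convex_Ioi 0)
    · intro x hx
      exact (hfderiv x hx).continuousAt.continuousWithinAt
    · rw [interior_Ioi]
      intro a ha b hb hab
      rw [hderivf a ha, hderivf b hb]
      have := hnhmono ha hb hab
      linarith
  -- nh (p' 1) = 1 and f (p' 1) = 0
  have hnh1 : nh (p' 1) = 1 := (hne (p' 1) hκs).mpr rfl
  have hf0 : f (p' 1) = 0 := by
    rw [hf, hnh1]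
    ring
  -- positivity of f off p' 1
  have hfpos : ∀ κ : ℝ, 0 < κ → κ ≠ p' 1 → 0 < f κ := by
    intro κ hκ hne'
    rcases lt_or_gt_of_ne hne' with hlt | hgt
    · -- κ < p' 1 : f strictly anti on [κ, p' 1]
      have hanti : StrictAntiOn f (Set.Icc κ (p' 1)) := by
        apply strictAntiOn_of_deriv_neg (convex_Icc _ _)
        · intro x hx
          have hx0 : 0 < x := lt_of_lt_of_le hκ hx.1
          exact (hfderiv x hx0).continuousAt.continuousWithinAt
        · intro x hx
          rw [interior_Icc] at hx
          have hx0 : 0 < x := lt_trans hκ hx.1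
          rw [hderivf x hx0]
          have : nh x < nh (p' 1) := hnhmono (Set.mem_Ioi.mpr hx0) (Set.mem_Ioi.mpr hκs) hx.2
          rw [hnh1] at this
          linarith
      have := hanti (Set.left_mem_Icc.mpr hlt.le) (Set.right_mem_Icc.mpr hlt.le) hlt
      rw [hf0] at this
      exact this
    · -- p' 1 < κ : f strictly mono on [p' 1, κ]
      have hmono' : StrictMonoOn f (Set.Icc (p' 1) κ) := by
        apply strictMonoOn_of_deriv_pos (convex_Icc _ _)
        · intro x hx
          have hx0 : 0 < x := lt_of_lt_of_le hκs hx.1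
          exact (hfderiv x hx0).continuousAt.continuousWithinAt
        · intro x hx
          rw [interior_Icc] at hx
          have hx0 : 0 < x := lt_trans hκs hx.1
          rw [hderivf x hx0]
          have : nh (p' 1) < nh x := hnhmono (Set.mem_Ioi.mpr hκs) (Set.mem_Ioi.mpr hx0) hx.1
          rw [hnh1] at this
          linarith
      have := hmono' (Set.left_mem_Icc.mpr hgt.le) (Set.right_mem_Icc.mpr hgt.le) hgt
      rw [hf0] at this
      exact this
  refine ⟨?_, hconv, hderivf, hf0, hfpos⟩
  intro κ hκ
  obtain ⟨hn0, _⟩ := hnh κ hκ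
  have hdpos : 0 < (nh κ) ^ 2 * p' (nh κ) := by
    have := hp'pos (nh κ) hn0
    positivity
  have hfge : 0 ≤ f κ := by
    rcases eq_or_ne κ (p' 1) with h | h
    · rw [h, hf0]
    · exact (hfpos κ hκ h).le
  have hκle : κ ≤ (nh κ) ^ 2 * p' (nh κ) := by
    have := hf κ
    linarith [hfge, (hf κ).symm.le, (hf κ).le]
  refine ⟨?_, ?_, ?_⟩
  · rw [hτh]; exact div_pos hκ hdpos
  · rw [hτh]; exact (div_le_one hdpos).mpr hκle
  · rw [hτh, div_eq_one_iff_eq hdpos.ne']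
    constructor
    · intro h1
      by_contra hc
      have := hfpos κ hκ hc
      rw [hf] at this
      linarith
    · intro h1
      have := hf0
      rw [hf (p' 1)] at this
      rw [h1] at *
      linarith
end
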